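/- The value iteration algorithm converges: the operator T has a unique fixed point V* : 𝒮 → ℝ (the stationary value function, satisfying V*(S) = min_{d ∈ 𝒟} max_{Z ∈ mem(S)} [ C(Z) + Ĉ(d) + β · max_{S' ∈ Q(S,d,Z)} V*(S') ] for all S ∈ 𝒮), and for every initial function V₀ : 𝒮 → ℝ, the sequence of iterates Tⁿ V₀ converges to V* as n → ∞ (in the supremum metric on 𝒮 → ℝ). -/
import Mathlib


open Finset Filter

private lemma sup'_le_sup'_add {α : Type*} (s : Finset α) (hs : s.Nonempty)
    (f g : α → ℝ) (c : ℝ) (h : ∀ x ∈ s, f x ≤ g x + c) :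
    s.sup' hs f ≤ s.sup' hs g + c := by
  obtain ⟨x, hx, hfx⟩ := Finset.exists_mem_eq_sup' hs f
  calc s.sup' hs f = f x := hfx
    _ ≤ g x + c := h x hx
    _ ≤ s.sup' hs g + c := by
        gcongr
        exact Finset.le_sup' g hx

private lemma inf'_le_inf'_add {α : Type*} (s : Finset α) (hs : s.Nonempty)
    (f g : α → ℝ) (c : ℝ) (h : ∀ x ∈ s, f x ≤ g x + c) :
    s.inf' hs f ≤ s.inf' hs g + c := by
  obtain ⟨x, hx, hgx⟩ := Finset.exists_mem_eq_inf' hs g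
  calc s.inf' hs f ≤ f x := Finset.inf'_le f hx
    _ ≤ g x + c := h x hx
    _ = s.inf' hs g + c := by rw [hgx]

/-- Value iteration converges: the operator `T` has a unique fixed point
`V*` (the stationary value function), and for every initial function `V₀`, the iterates
`Tⁿ V₀` converge to `V*` (in the supremum metric on `𝒮 → ℝ`, which for the finite type
`𝒮` is the metric of the product space `𝒮 → ℝ`). -/
theorem value_iteration_converges
    {𝒮 𝒟 𝒵 : Type*} [Fintype 𝒮] [Nonempty 𝒮] [Fintype 𝒟] [Nonempty 𝒟] [Fintype 𝒵]
    (mem : 𝒮 → Finset 𝒵) (hmem : ∀ S, (mem S).Nonempty)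
    (C : 𝒵 → ℝ) (Chat : 𝒟 → ℝ)
    (β : ℝ) (hβ0 : 0 ≤ β) (hβ1 : β < 1)
    (Q : 𝒮 → 𝒟 → 𝒵 → Finset 𝒮) (hQ : ∀ S d Z, (Q S d Z).Nonempty)
    (T : (𝒮 → ℝ) → (𝒮 → ℝ))
    (hT : ∀ V S, T V S =
      Finset.univ.inf' Finset.univ_nonempty (fun d : 𝒟 =>
        (mem S).sup' (hmem S) (fun Z =>
          C Z + Chat d + β * (Q S d Z).sup' (hQ S d Z) V))) :
    ∃ Vstar : 𝒮 → ℝ,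
      (∀ S : 𝒮, Vstar S =
        Finset.univ.inf' Finset.univ_nonempty (fun d : 𝒟 =>
          (mem S).sup' (hmem S) (fun Z =>
            C Z + Chat d + β * (Q S d Z).sup' (hQ S d Z) Vstar))) ∧
      (∀ W : 𝒮 → ℝ, T W = W → W = Vstar) ∧
      (∀ V₀ : 𝒮 → ℝ, Tendsto (fun n : ℕ => T^[n] V₀) atTop (nhds Vstar)) := by
  -- key estimate
  have key : ∀ V W : 𝒮 → ℝ, ∀ S, T V S ≤ T W S + β * dist V W := by
    intro V W S
    rw [hT, hT]
    apply inf'_le_inf'_add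
    intro d _
    apply sup'_le_sup'_add
    intro Z _
    have : (Q S d Z).sup' (hQ S d Z) V ≤ (Q S d Z).sup' (hQ S d Z) W + dist V W := by
      apply sup'_le_sup'_add
      intro S' _
      have h1 : dist (V S') (W S') ≤ dist V W := dist_le_pi_dist V W S'
      have h2 : V S' - W S' ≤ dist (V S') (W S') := by
        rw [Real.dist_eq]; exact le_abs_self _
      linarith
    nlinarith
  have hdist : ∀ V W : 𝒮 → ℝ, dist (T V) (T W) ≤ β * dist V W := by
    intro V W
    rw [dist_pi_le_iff (by positivity)]
    intro S
    rw [Real.dist_eq, abs_le]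
    constructor
    · have := key W V S
      have : β * dist W V = β * dist V W := by rw [dist_comm]
      linarith [key W V S, this]
    · linarith [key V W S]
  have hlip : LipschitzWith ⟨β, hβ0⟩ T :=
    LipschitzWith.of_dist_le_mul (by intro V W; exact hdist V W)
  have hcontr : ContractingWith ⟨β, hβ0⟩ T := ⟨by exact_mod_cast hβ1, hlip⟩
  refine ⟨hcontr.fixedPoint T, ?_, ?_, ?_⟩
  · intro S
    have h := hcontr.fixedPoint_isFixedPt
    conv_lhs => rw [← h]
    rw [hT]
  · intro W hW
    exact hcontr.fixedPoint_unique hW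
  · intro V₀
    exact hcontr.tendsto_iterate_fixedPoint V₀
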